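/- Define g₁, g₂ : ℝ → ℝ by g₁(x) := 8 − x³ and g₂(x) := −x² + 6x − 8, so K := {x ∈ ℝ : g₁(x) ≤ 0, g₂(x) ≤ 0} = {2} ∪ [4, +∞), which is closed. Let C := [2, 3], K̃ := C ∩ K = {2}, and x̄ := 2. Then: g₁ and g₂ are tangentially convex at x̄ with g₁(x̄) = g₂(x̄) = 0, ∂_T g₁(x̄) = {−12} and ∂_T g₂(x̄) = {2}; D(x̄) = {0} = T_{K̃}(x̄), so the non-smooth Abadie constraint qualification holds at x̄; K is not nearly convex at x̄; and M(x̄) = ℝ while (K̃ − x̄)° = ℝ and (K − x̄)° = (−∞, 0], so M(x̄) ≠ (K − x̄)°. Hence the near-convexity hypothesis cannot be omitted from the dual cone characterization M(x̄) = (K − x̄)° = (K̃ − x̄)°. -/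

import Mathlib

open Filter Set Pointwise
open scoped Topology RealInnerProductSpace

noncomputable section

variable {E : Type*} [NormedAddCommGroup E] [InnerProductSpace ℝ E]

/-- Directional derivative of `f` at `x` in direction `v`, as the limit of difference
quotients as `α → 0⁺` (defined via `limUnder`; meaningful when the limit exists). -/
noncomputable def dirDeriv (f : E → ℝ) (x v : E) : ℝ :=
  limUnder (𝓝[>] (0:ℝ)) (fun α : ℝ => (f (x + α • v) - f x) / α)

/-- `f` is tangentially convex at `x`: the directional derivative exists (and is finite)
in every direction, and `v ↦ f'(x, v)` is convex. -/
def TangentiallyConvexAt (f : E → ℝ) (x : E) : Prop :=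
  (∀ v : E, Tendsto (fun α : ℝ => (f (x + α • v) - f x) / α) (𝓝[>] (0:ℝ))
      (𝓝 (dirDeriv f x v)))
  ∧ ConvexOn ℝ Set.univ (dirDeriv f x)

/-- The tangential subdifferential `∂_T f (x)`. -/
def tangSubdiff (f : E → ℝ) (x : E) : Set E :=
  {p : E | ∀ v : E, ⟪p, v⟫ ≤ dirDeriv f x v}

/-- The polar cone `(W - x)°`. -/
def polarOf (W : Set E) (x : E) : Set E :=
  {l : E | ∀ y ∈ W, ⟪l, y - x⟫ ≤ 0}

/-- The contingent (Bouligand tangent) cone of `U` at `x`. -/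
def contingentCone (U : Set E) (x : E) : Set E :=
  {v : E | ∃ (a : ℕ → ℝ) (w : ℕ → E), (∀ k, 0 < a k) ∧
    Tendsto a atTop (𝓝 0) ∧ Tendsto w atTop (𝓝 v) ∧ ∀ k, x + a k • w k ∈ U}

/-- `V` is nearly convex at `x ∈ V`. -/
def NearlyConvexAt (V : Set E) (x : E) : Prop :=
  ∀ y ∈ V, ∃ t : ℕ → ℝ, (∀ k, 0 < t k) ∧ Tendsto t atTop (𝓝 0) ∧
    ∀ᶠ k in atTop, x + t k • (y - x) ∈ V

/-- The non-smooth linearized tangential cone `D(x)`. -/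
def linTangCone {m : ℕ} (g : Fin m → E → ℝ) (x : E) : Set E :=
  {v : E | ∀ j : Fin m, g j x = 0 → ∀ η ∈ tangSubdiff (g j) x, ⟪v, η⟫ ≤ 0}

/-- The set `M(x)` of nonnegative combinations of tangential subgradients of active
constraints. -/
def Mset {m : ℕ} (g : Fin m → E → ℝ) (x : E) : Set E :=
  {u : E | ∃ (lam : Fin m → ℝ) (η : Fin m → E),
    (∀ j, 0 ≤ lam j) ∧ (∀ j, lam j * g j x = 0) ∧
    (∀ j, η j ∈ tangSubdiff (g j) x) ∧ u = ∑ j, lam j • η j}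

/-- `w = P_W(x)`: `w` is a best approximation of `x` from `W`. -/
def IsBestApprox (W : Set E) (x w : E) : Prop :=
  w ∈ W ∧ ∀ u ∈ W, ‖x - w‖ ≤ ‖x - u‖

/-- The convex subdifferential of `h` at `x₀`. -/
def convexSubdiff (h : E → ℝ) (x₀ : E) : Set E :=
  {p : E | ∀ y : E, ⟪p, y - x₀⟫ ≤ h y - h x₀}


/-- The constraint functions of Example 3.2: `g₁(x) = 8 - x³`, `g₂(x) = -x² + 6x - 8`. -/
def exg16 : Fin 2 → ℝ → ℝ := ![fun x => 8 - x ^ 3, fun x => -x ^ 2 + 6 * x - 8]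

/-- The constraint set of Example 3.2. -/
def exK16 : Set ℝ := {x | ∀ j : Fin 2, exg16 j x ≤ 0}

/-- The set `C` of Example 3.2. -/
def exC16 : Set ℝ := Set.Icc 2 3

/-!
The point `x̄ = 2` is isolated in `K = {2} ∪ [4, ∞)`, so `K` cannot be nearly convex there and
the tangent cone of `K̃ = {2}` is trivial. Both constraints are active and differentiable at `2`,
with derivatives `-12` and `2` of opposite signs: hence `D(x̄) = {0}`, while nonnegative
combinations of `-12` and `2` exhaust `ℝ`. The polar cone of `K - 2` only sees the directions
towards `[4, ∞)`, so it is `(-∞, 0] ≠ ℝ = M(x̄)`.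
-/

section Differentiable

variable {f : E → ℝ} {x : E}

theorem HasLineDerivAt.tendsto_div_nhdsGT {v : E} {f' : ℝ} (h : HasLineDerivAt ℝ f f' x v) :
    Tendsto (fun α : ℝ => (f (x + α • v) - f x) / α) (𝓝[>] 0) (𝓝 f') := by
  simpa only [smul_eq_mul, inv_mul_eq_div] using h.tendsto_slope_zero_right

theorem HasFDerivAt.dirDeriv_eq {f' : E →L[ℝ] ℝ} (h : HasFDerivAt f f' x) : dirDeriv f x = f' :=
  funext fun v => (h.hasLineDerivAt v).tendsto_div_nhdsGT.limUnder_eq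

theorem HasFDerivAt.tangentiallyConvexAt {f' : E →L[ℝ] ℝ} (h : HasFDerivAt f f' x) :
    TangentiallyConvexAt f x := by
  rw [TangentiallyConvexAt, h.dirDeriv_eq]
  exact ⟨fun v => (h.hasLineDerivAt v).tendsto_div_nhdsGT, f'.toLinearMap.convexOn convex_univ⟩

theorem HasGradientAt.tangSubdiff_eq [CompleteSpace E] {p : E} (h : HasGradientAt f p x) :
    tangSubdiff f x = {p} := by
  ext q
  simp only [tangSubdiff, h.hasFDerivAt.dirDeriv_eq, InnerProductSpace.toDual_apply_apply,
    mem_ofPred_eq, mem_singleton_iff]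
  refine ⟨fun hq => ?_, fun hq v => hq ▸ le_rfl⟩
  have hqp := hq (q - p)
  rwa [← sub_nonpos, ← inner_sub_left, real_inner_self_nonpos, sub_eq_zero] at hqp

end Differentiable

theorem contingentCone_singleton (x : E) : contingentCone {x} x = {0} := by
  ext v
  simp only [contingentCone, mem_ofPred_eq, mem_singleton_iff, add_eq_left]
  constructor
  · rintro ⟨a, w, ha_pos, -, hw, hmem⟩
    have hw_zero : w = 0 := funext fun k => (smul_eq_zero.1 (hmem k)).resolve_left (ha_pos k).ne'
    rw [hw_zero] at hw
    exact tendsto_nhds_unique hw tendsto_const_nhds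
  · rintro rfl
    exact ⟨fun k => 1 / (k + 1), 0, fun k => by positivity,
      tendsto_one_div_add_atTop_nhds_zero_nat, tendsto_const_nhds, fun k => smul_zero _⟩

theorem polarOf_singleton (x : E) : polarOf {x} x = univ :=
  eq_univ_of_forall fun l y hy => by rw [mem_singleton_iff.1 hy, sub_self, inner_zero_right]

theorem not_nearlyConvexAt_of_forall_notMem {V : Set E} {x y : E} (hy : y ∈ V) {ε : ℝ}
    (hε : 0 < ε) (hgap : ∀ t ∈ Ioo 0 ε, x + t • (y - x) ∉ V) : ¬ NearlyConvexAt V x := by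
  intro hV
  obtain ⟨t, ht_pos, ht, hmem⟩ := hV y hy
  obtain ⟨k, htk, hk⟩ := ((ht.eventually_lt_const hε).and hmem).exists
  exact hgap (t k) ⟨ht_pos k, htk⟩ hk

theorem exg16_two (j : Fin 2) : exg16 j 2 = 0 := by
  fin_cases j <;> norm_num [exg16]

theorem hasDerivAt_exg16_zero : HasDerivAt (exg16 0) (-12) 2 :=
  ((hasDerivAt_pow 3 (2 : ℝ)).const_sub 8).congr_deriv (by norm_num)

theorem hasDerivAt_exg16_one : HasDerivAt (exg16 1) 2 2 :=
  ((((hasDerivAt_pow 2 (2 : ℝ)).neg).add ((hasDerivAt_id' (2 : ℝ)).const_mul 6)).sub_const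
    8).congr_deriv (by norm_num)

theorem tangSubdiff_exg16_zero : tangSubdiff (exg16 0) 2 = {-12} :=
  hasDerivAt_exg16_zero.hasGradientAt'.tangSubdiff_eq

theorem tangSubdiff_exg16_one : tangSubdiff (exg16 1) 2 = {2} :=
  hasDerivAt_exg16_one.hasGradientAt'.tangSubdiff_eq

theorem exK16_eq : exK16 = {2} ∪ Ici 4 := by
  ext x
  simp only [exK16, Fin.forall_fin_two, exg16, Matrix.cons_val_zero, Matrix.cons_val_one,
    mem_ofPred_eq, mem_union, mem_singleton_iff, mem_Ici]
  constructor
  · rintro ⟨h₁, h₂⟩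
    -- `8 - x³ ≤ 0` forces `x ≥ 2`, and `-(x - 2)(x - 4) ≤ 0` then forces `x = 2` or `x ≥ 4`
    have hx : 2 ≤ x := by nlinarith [sq_nonneg (x + 1)]
    rcases hx.eq_or_lt with rfl | hx
    · exact Or.inl rfl
    · exact Or.inr (by nlinarith)
  · rintro (rfl | hx)
    · norm_num
    · constructor <;> nlinarith [mul_nonneg (sub_nonneg.2 hx) (sq_nonneg x)]

theorem exC16_inter_exK16 : exC16 ∩ exK16 = {2} := by
  ext x
  simp only [exC16, exK16_eq, mem_inter_iff, mem_Icc, mem_union, mem_singleton_iff, mem_Ici]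
  constructor
  · rintro ⟨⟨-, hx⟩, rfl | hx'⟩
    · rfl
    · linarith
  · rintro rfl
    norm_num

theorem linTangCone_exg16 : linTangCone exg16 2 = {0} := by
  ext v
  simp only [linTangCone, mem_ofPred_eq, mem_singleton_iff, Fin.forall_fin_two, exg16_two,
    tangSubdiff_exg16_zero, tangSubdiff_exg16_one, forall_eq, Real.inner_apply, true_implies]
  constructor
  · rintro ⟨h₁, h₂⟩
    linarith
  · rintro rfl
    norm_num

theorem mset_exg16 : Mset exg16 2 = univ := by
  refine eq_univ_of_forall fun u => ⟨![u⁻ / 12, u⁺ / 2], ![-12, 2], ?_, ?_, ?_, ?_⟩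
  · simp [Fin.forall_fin_two, div_nonneg]
  · simp [exg16_two]
  · simp [Fin.forall_fin_two, tangSubdiff_exg16_zero, tangSubdiff_exg16_one]
  · simp only [Fin.sum_univ_two, Matrix.cons_val_zero, Matrix.cons_val_one, smul_eq_mul]
    linarith [posPart_sub_negPart u]

theorem polarOf_exK16 : polarOf exK16 2 = Iic 0 := by
  ext l
  simp only [polarOf, exK16_eq, Real.inner_apply, mem_ofPred_eq, mem_Iic, mem_union,
    mem_singleton_iff, mem_Ici]
  constructor
  · intro hl
    nlinarith [hl 4 (Or.inr le_rfl)]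
  · rintro hl y (rfl | hy) <;> nlinarith

theorem not_nearlyConvexAt_exK16 : ¬ NearlyConvexAt exK16 2 := by
  refine not_nearlyConvexAt_of_forall_notMem (y := 4) (by simp [exK16_eq]) one_pos ?_
  rintro t ⟨ht₀, ht₁⟩
  simp only [exK16_eq, smul_eq_mul, mem_union, mem_singleton_iff, mem_Ici, not_or]
  constructor <;> intro h <;> nlinarith

/-- Example 3.2: with `K = {2} ∪ [4, ∞)`, `C = [2,3]`, `K̃ = {2}` and
`x̄ = 2`, the constraints are tangentially convex at `x̄` with `g₁(x̄) = g₂(x̄) = 0`,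
`∂_T g₁(x̄) = {-12}`, `∂_T g₂(x̄) = {2}`; NACQ holds at `x̄` (`D(x̄) = {0} = T_{K̃}(x̄)`);
`K` is not nearly convex at `x̄`; and `M(x̄) = ℝ ≠ (-∞, 0] = (K - x̄)°` while
`(K̃ - x̄)° = ℝ`: near convexity cannot be omitted from Theorem 3.1. -/
theorem example_nearly_convex_needed :
    exK16 = {2} ∪ Set.Ici 4 ∧ IsClosed exK16 ∧
    exC16 ∩ exK16 = {2} ∧
    (∀ j : Fin 2, TangentiallyConvexAt (exg16 j) 2) ∧
    (∀ j : Fin 2, exg16 j 2 = 0) ∧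
    tangSubdiff (exg16 0) 2 = {-12} ∧
    tangSubdiff (exg16 1) 2 = {2} ∧
    linTangCone exg16 2 = {0} ∧
    contingentCone (exC16 ∩ exK16) 2 = {0} ∧
    ¬ NearlyConvexAt exK16 2 ∧
    Mset exg16 2 = Set.univ ∧
    polarOf (exC16 ∩ exK16) 2 = Set.univ ∧
    polarOf exK16 2 = Set.Iic 0 ∧
    Mset exg16 2 ≠ polarOf exK16 2 := by
  have hM_ne : Mset exg16 2 ≠ polarOf exK16 2 := by
    rw [mset_exg16, polarOf_exK16]
    exact fun h => absurd (h ▸ mem_univ (1 : ℝ)) (by norm_num)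
  refine ⟨exK16_eq, exK16_eq ▸ isClosed_singleton.union isClosed_Ici, exC16_inter_exK16,
    ?_, exg16_two, tangSubdiff_exg16_zero, tangSubdiff_exg16_one, linTangCone_exg16, ?_,
    not_nearlyConvexAt_exK16, mset_exg16, ?_, polarOf_exK16, hM_ne⟩
  · rw [Fin.forall_fin_two]
    exact ⟨hasDerivAt_exg16_zero.hasFDerivAt.tangentiallyConvexAt,
      hasDerivAt_exg16_one.hasFDerivAt.tangentiallyConvexAt⟩
  · rw [exC16_inter_exK16, contingentCone_singleton]
  · rw [exC16_inter_exK16, polarOf_singleton]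

end
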